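/- arXiv:2501.01696 — 5 statements merged into one kernel-verified Lean document; each statement's English description precedes it below -/
import Mathlib

section
/- Let S be an n₁×n₂ real matrix such that every column of S has at most α·n₁ nonzero entries and every row has at most α·n₂ nonzero entries, where 0 ≤ α ≤ 1. Then the spectral norm of S satisfies ‖S‖ ≤ (α/2)·(n₁ + n₂)·‖S‖_∞, where ‖S‖_∞ = max_{i,j}|S_{ij}|. -/
open Matrix BigOperators

/-- Frobenius norm of a real matrix. -/
noncomputable def frob {m n : Type*} [Fintype m] [Fintype n] (A : Matrix m n ℝ) : ℝ :=
  Real.sqrt (∑ i, ∑ j, (A i j) ^ 2)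

/-- Spectral norm (largest singular value) of a real matrix. -/
noncomputable def specNorm {m n : Type*} [Fintype m] [Fintype n] [DecidableEq n]
    (A : Matrix m n ℝ) : ℝ :=
  Real.sqrt (⨆ i, (Matrix.isHermitian_conjTranspose_mul_self A).eigenvalues i)

/-- Smallest singular value (√(λ_min(AᴴA)) convention). -/
noncomputable def sigmaMin {m n : Type*} [Fintype m] [Fintype n] [DecidableEq n]
    (A : Matrix m n ℝ) : ℝ :=
  Real.sqrt (⨅ i, (Matrix.isHermitian_conjTranspose_mul_self A).eigenvalues i)

/-- Maximum Euclidean row norm ‖·‖₂,∞. -/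
noncomputable def rowTwoInf {m n : Type*} [Fintype m] [Fintype n] (A : Matrix m n ℝ) : ℝ :=
  ⨆ i, Real.sqrt (∑ j, (A i j) ^ 2)

/-- Entrywise sup norm ‖·‖∞. -/
noncomputable def entryInf {m n : Type*} [Fintype m] [Fintype n] (A : Matrix m n ℝ) : ℝ :=
  ⨆ i, ⨆ j, |A i j|

/-!
By the Schur test, `‖S‖² ≤ R · C`, where `R` and `C` bound the absolute row and column sums
of `S`. A row has at most `α n₂` nonzero entries, each of size at most `‖S‖_∞`, so
`R = α n₂ ‖S‖_∞` works, and likewise `C = α n₁ ‖S‖_∞`; AM–GM gives `√(R C) ≤ (R + C) / 2`.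
-/

section EntryInf

variable {m n : Type*} [Fintype m] [Fintype n]

theorem entryInf_nonneg (A : Matrix m n ℝ) : 0 ≤ entryInf A :=
  Real.iSup_nonneg fun _ => Real.iSup_nonneg fun _ => abs_nonneg _

theorem abs_le_entryInf (A : Matrix m n ℝ) (i : m) (j : n) : |A i j| ≤ entryInf A :=
  calc |A i j| ≤ ⨆ j, |A i j| :=
        le_ciSup (f := fun j => |A i j|) (Set.finite_range _).bddAbove j
    _ ≤ entryInf A := le_ciSup (Set.finite_range fun i => ⨆ j, |A i j|).bddAbove i

end EntryInf

theorem sum_abs_le_card_ne_zero_mul {ι : Type*} [Fintype ι] {f : ι → ℝ} {M : ℝ}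
    (hf : ∀ i, |f i| ≤ M) : ∑ i, |f i| ≤ Nat.card {i // f i ≠ 0} * M := by
  classical
  rw [Nat.card_eq_fintype_card, Fintype.card_subtype, ← nsmul_eq_mul, ← Finset.sum_const,
    Finset.sum_filter]
  refine Finset.sum_le_sum fun i _ => ?_
  split_ifs with h
  exacts [hf i, by simp [not_not.mp h]]

/-- The Schur test, in squared form. -/
theorem sum_mulVec_sq_le_of_sum_abs_le {m n : Type*} [Fintype m] [Fintype n]
    (A : Matrix m n ℝ) {R C : ℝ} (hR : 0 ≤ R) (hrow : ∀ i, ∑ j, |A i j| ≤ R)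
    (hcol : ∀ j, ∑ i, |A i j| ≤ C) (v : n → ℝ) :
    ∑ i, (A *ᵥ v) i ^ 2 ≤ R * C * ∑ j, v j ^ 2 := by
  have hweighted : ∀ i, (A *ᵥ v) i ^ 2 ≤ R * ∑ j, |A i j| * v j ^ 2 := fun i =>
    calc (A *ᵥ v) i ^ 2 ≤ (∑ j, |A i j|) * ∑ j, |A i j| * v j ^ 2 :=
          Finset.sum_sq_le_sum_mul_sum_of_sq_le_mul _ (fun _ _ => abs_nonneg _)
            (fun _ _ => by positivity) fun j _ => by rw [← mul_assoc, ← sq, sq_abs, mul_pow]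
      _ ≤ R * ∑ j, |A i j| * v j ^ 2 := by gcongr; exact hrow i
  calc ∑ i, (A *ᵥ v) i ^ 2 ≤ ∑ i, R * ∑ j, |A i j| * v j ^ 2 :=
        Finset.sum_le_sum fun i _ => hweighted i
    _ = R * ∑ j, (∑ i, |A i j|) * v j ^ 2 := by
        simp only [← Finset.mul_sum, Finset.sum_mul]; rw [Finset.sum_comm]
    _ ≤ R * ∑ j, C * v j ^ 2 := by gcongr with j; exact hcol j
    _ = R * C * ∑ j, v j ^ 2 := by rw [← Finset.mul_sum, mul_assoc]

theorem specNorm_le_of_sum_mulVec_sq_le {m n : Type*} [Fintype m] [Fintype n] [DecidableEq n]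
    (A : Matrix m n ℝ) {c : ℝ} (hc : 0 ≤ c)
    (h : ∀ v : n → ℝ, ∑ i, (A *ᵥ v) i ^ 2 ≤ c ^ 2 * ∑ j, v j ^ 2) : specNorm A ≤ c := by
  set hA := isHermitian_conjTranspose_mul_self A
  have hev : ∀ k, hA.eigenvalues k ≤ c ^ 2 := fun k => by
    have hv : ∑ j, hA.eigenvectorBasis k j ^ 2 = 1 := by
      have hunit := hA.eigenvectorBasis.orthonormal.1 k
      rw [EuclideanSpace.norm_eq, Real.sqrt_eq_one] at hunit
      simpa [Real.norm_eq_abs, sq_abs] using hunit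
    have hAv : hA.eigenvalues k = ∑ i, (A *ᵥ hA.eigenvectorBasis k) i ^ 2 := by
      rw [hA.eigenvalues_eq, ← mulVec_mulVec, dotProduct_mulVec, vecMul_conjTranspose]
      simp [dotProduct, sq]
    rw [hAv]
    exact (h _).trans_eq (by rw [hv, mul_one])
  calc specNorm A ≤ Real.sqrt (c ^ 2) := Real.sqrt_le_sqrt (Real.iSup_le hev (sq_nonneg c))
    _ = c := Real.sqrt_sq hc

theorem stmt_2_general {n₁ n₂ : ℕ} (α : ℝ) (hα0 : 0 ≤ α)
    (S : Matrix (Fin n₁) (Fin n₂) ℝ)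
    (hcol : ∀ j, (Nat.card {i : Fin n₁ // S i j ≠ 0} : ℝ) ≤ α * n₁)
    (hrow : ∀ i, (Nat.card {j : Fin n₂ // S i j ≠ 0} : ℝ) ≤ α * n₂) :
    specNorm S ≤ α / 2 * (n₁ + n₂) * entryInf S := by
  set M := entryInf S
  have hM : 0 ≤ M := entryInf_nonneg S
  have hrowsum : ∀ i, ∑ j, |S i j| ≤ α * n₂ * M := fun i =>
    (sum_abs_le_card_ne_zero_mul (abs_le_entryInf S i)).trans (by gcongr; exact hrow i)
  have hcolsum : ∀ j, ∑ i, |S i j| ≤ α * n₁ * M := fun j =>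
    (sum_abs_le_card_ne_zero_mul (abs_le_entryInf S · j)).trans (by gcongr; exact hcol j)
  refine specNorm_le_of_sum_mulVec_sq_le S (by positivity) fun v => ?_
  refine (sum_mulVec_sq_le_of_sum_abs_le S (by positivity) hrowsum hcolsum v).trans ?_
  have hamgm : α * n₂ * M * (α * n₁ * M) ≤ (α / 2 * (n₁ + n₂) * M) ^ 2 := by
    nlinarith [mul_nonneg (sq_nonneg (α * M)) (sq_nonneg ((n₁ : ℝ) - n₂))]
  gcongr

theorem stmt_2 {n₁ n₂ : ℕ} (α : ℝ) (hα0 : 0 ≤ α) (hα1 : α ≤ 1)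
    (S : Matrix (Fin n₁) (Fin n₂) ℝ)
    (hcol : ∀ j, (Nat.card {i : Fin n₁ // S i j ≠ 0} : ℝ) ≤ α * n₁)
    (hrow : ∀ i, (Nat.card {j : Fin n₂ // S i j ≠ 0} : ℝ) ≤ α * n₂) :
    specNorm S ≤ α / 2 * (n₁ + n₂) * entryInf S :=
  stmt_2_general α hα0 S hcol hrow
end

section
/- Let L_♯, L_⋆ ∈ ℝ^{n×r} with L_⋆ = U_⋆·G^{1/2} where U_⋆ has orthonormal columns and G is an r×r positive definite diagonal matrix, and let Δ = L_♯ − L_⋆. If ‖Δ·G^{−1/2}‖ < 1 (spectral norm), then L_♯ has full column rank and ‖L_♯·(L_♯ᴴ·L_♯)^{−1}·G^{1/2}‖ ≤ 1/(1 − ‖Δ·G^{−1/2}‖). -/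
open Matrix BigOperators

/-!
Put `D = diagonal g` (the matrix `G^{1/2}`), `P = D⁻¹` and `E = (L - U D) P`, so that
`L P = U + E`. As `U` is an isometry, `‖(U + E) x‖ ≥ (1 - ‖E‖) ‖x‖`: this is Weyl's inequality
`σ_min(L P) ≥ 1 - ‖E‖`. Hence `B = L P`, and with it `L`, is injective. For any `B` with
`‖B x‖ ≥ c ‖x‖` and `y = (BᴴB)⁻¹ x`, Cauchy–Schwarz gives
`‖B y‖² = ⟪y, x⟫ ≤ ‖y‖ ‖x‖ ≤ ‖B y‖ ‖x‖ / c`, so `‖B (BᴴB)⁻¹‖ ≤ 1 / c`, and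
`B (BᴴB)⁻¹ = L (LᴴL)⁻¹ D`. Finally `specNorm` is the `L²` operator norm, because
`‖AᴴA‖ = ‖A‖²` and the norm of a Hermitian matrix is its largest absolute eigenvalue.
-/

open scoped Matrix.Norms.L2Operator InnerProductSpace ComplexOrder
open WithLp (toLp)
open RCLike (re)

lemma pi_norm_eq_iSup_of_nonneg {ι : Type*} [Fintype ι] {v : ι → ℝ} (hv : ∀ i, 0 ≤ v i) :
    ‖v‖ = ⨆ i, v i :=
  le_antisymm
    ((pi_norm_le_iff_of_nonneg (Real.iSup_nonneg hv)).2 fun i ↦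
      (Real.norm_of_nonneg (hv i)).trans_le (le_ciSup (Finite.bddAbove_range v) i))
    (Real.iSup_le (fun i ↦ (Real.le_norm_self _).trans (norm_le_pi_norm v i)) (norm_nonneg v))

namespace Matrix

variable {𝕜 m n : Type*} [RCLike 𝕜] [Fintype m] [Fintype n]

lemma IsHermitian.l2_opNorm_eq_norm_eigenvalues [DecidableEq n] {A : Matrix n n 𝕜}
    (hA : A.IsHermitian) : ‖A‖ = ‖hA.eigenvalues‖ := by
  conv_lhs => rw [hA.spectral_theorem]
  simp only [Unitary.conjStarAlgAut_apply, ← Unitary.coe_star, CStarRing.norm_mul_coe_unitary,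
    CStarRing.norm_coe_unitary_mul, l2_opNorm_diagonal]
  exact ((algebraMap_isometry ℝ 𝕜).postcomp_pi).norm_map_of_map_zero (by simp) _

lemma specNorm_eq_l2_opNorm [DecidableEq n] (A : Matrix m n ℝ) : specNorm A = ‖A‖ := by
  rw [specNorm, ← pi_norm_eq_iSup_of_nonneg (eigenvalues_conjTranspose_mul_self_nonneg A),
    ← IsHermitian.l2_opNorm_eq_norm_eigenvalues, l2_opNorm_conjTranspose_mul_self,
    Real.sqrt_mul_self (norm_nonneg A)]

lemma l2_opNorm_le_of_mulVec_le [DecidableEq n] (A : Matrix m n 𝕜) {c : ℝ} (hc : 0 ≤ c)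
    (h : ∀ x : n → 𝕜, ‖toLp 2 (A *ᵥ x)‖ ≤ c * ‖toLp 2 x‖) : ‖A‖ ≤ c :=
  ContinuousLinearMap.opNorm_le_bound _ hc fun x ↦ h x.ofLp

lemma norm_toLp_mulVec_sq (B : Matrix m n 𝕜) (x : n → 𝕜) :
    ‖toLp 2 (B *ᵥ x)‖ ^ 2 = re ⟪toLp 2 x, toLp 2 ((Bᴴ * B) *ᵥ x)⟫_𝕜 := by
  rw [← mulVec_mulVec, @norm_sq_eq_re_inner 𝕜, EuclideanSpace.inner_eq_star_dotProduct,
    EuclideanSpace.inner_eq_star_dotProduct]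
  simp only [star_mulVec]
  congr 1
  rw [dotProduct_comm, ← dotProduct_mulVec, dotProduct_comm]

lemma norm_toLp_mulVec_of_conjTranspose_mul_self [DecidableEq n] {U : Matrix m n 𝕜}
    (hU : Uᴴ * U = 1) (x : n → 𝕜) : ‖toLp 2 (U *ᵥ x)‖ = ‖toLp 2 x‖ := by
  rw [← sq_eq_sq₀ (norm_nonneg _) (norm_nonneg _), norm_toLp_mulVec_sq, hU, one_mulVec,
    @norm_sq_eq_re_inner 𝕜]

lemma sub_norm_mul_norm_le_norm_add_mulVec [DecidableEq n] {U : Matrix m n 𝕜}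
    (hU : Uᴴ * U = 1) (E : Matrix m n 𝕜) (x : n → 𝕜) :
    (1 - ‖E‖) * ‖toLp 2 x‖ ≤ ‖toLp 2 ((U + E) *ᵥ x)‖ := by
  have hE : ‖toLp 2 (E *ᵥ x)‖ ≤ ‖E‖ * ‖toLp 2 x‖ := l2_opNorm_mulVec E (toLp 2 x)
  have hUE : ‖toLp 2 (U *ᵥ x)‖ ≤ ‖toLp 2 ((U + E) *ᵥ x)‖ + ‖toLp 2 (E *ᵥ x)‖ := by
    simpa [add_mulVec] using norm_le_add_norm_add (toLp 2 (U *ᵥ x)) (toLp 2 (E *ᵥ x))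
  rw [norm_toLp_mulVec_of_conjTranspose_mul_self hU] at hUE
  linarith

omit [Fintype m] in
lemma rank_eq_card_of_injective_mulVec {K : Type*} [Field K] {B : Matrix m n K}
    (hB : Function.Injective B.mulVec) : B.rank = Fintype.card n := by
  rw [rank, LinearMap.finrank_range_of_inj hB, Module.finrank_fintype_fun_eq_card]

lemma mulVec_injective_of_norm_le {B : Matrix m n 𝕜} {c : ℝ} (hc : 0 < c)
    (hB : ∀ x, c * ‖toLp 2 x‖ ≤ ‖toLp 2 (B *ᵥ x)‖) : Function.Injective B.mulVec := by
  refine (injective_iff_map_eq_zero B.mulVecLin).2 fun x hx ↦ ?_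
  have h := hB x
  rw [mulVecLin_apply] at hx
  rw [hx, WithLp.toLp_zero, norm_zero] at h
  have : toLp 2 x = 0 := norm_le_zero_iff.1 (by nlinarith [norm_nonneg (toLp 2 x)])
  simpa using this

lemma l2_opNorm_mul_inv_conjTranspose_mul_self_le [DecidableEq n] {B : Matrix m n 𝕜} {c : ℝ}
    (hc : 0 < c) (hB : ∀ x, c * ‖toLp 2 x‖ ≤ ‖toLp 2 (B *ᵥ x)‖) :
    ‖B * (Bᴴ * B)⁻¹‖ ≤ c⁻¹ := by
  have hunit : IsUnit (Bᴴ * B) :=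
    (PosDef.conjTranspose_mul_self B (mulVec_injective_of_norm_le hc hB)).isUnit
  refine l2_opNorm_le_of_mulVec_le _ (inv_nonneg.2 hc.le) fun x ↦ ?_
  set y := (Bᴴ * B)⁻¹ *ᵥ x
  have hxy : (Bᴴ * B) *ᵥ y = x := by
    rw [mulVec_mulVec, mul_nonsing_inv _ ((isUnit_iff_isUnit_det _).1 hunit), one_mulVec]
  rw [← mulVec_mulVec]
  have hsq : ‖toLp 2 (B *ᵥ y)‖ ^ 2 ≤ ‖toLp 2 y‖ * ‖toLp 2 x‖ := by
    rw [norm_toLp_mulVec_sq, hxy]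
    exact re_inner_le_norm _ _
  have hy := hB y
  rw [inv_mul_eq_div, le_div_iff₀ hc]
  rcases (norm_nonneg (toLp 2 (B *ᵥ y))).eq_or_lt with h0 | hpos
  · rw [← h0, zero_mul]
    exact norm_nonneg _
  · nlinarith [norm_nonneg (toLp 2 x)]

lemma mul_inv_conjTranspose_mul_self_of_mul_eq_one [DecidableEq n] (L : Matrix m n 𝕜)
    {P Q : Matrix n n 𝕜} (hPQ : P * Q = 1) :
    L * P * ((L * P)ᴴ * (L * P))⁻¹ = L * (Lᴴ * L)⁻¹ * Qᴴ := by
  have hPinv : P⁻¹ = Q := inv_eq_right_inv hPQ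
  have hPHinv : (Pᴴ)⁻¹ = Qᴴ :=
    inv_eq_left_inv (by rw [← conjTranspose_mul, hPQ, conjTranspose_one])
  rw [conjTranspose_mul, show Pᴴ * Lᴴ * (L * P) = Pᴴ * (Lᴴ * L * P) by
    simp only [Matrix.mul_assoc], mul_inv_rev, mul_inv_rev, hPinv, hPHinv]
  simp only [Matrix.mul_assoc]
  rw [← Matrix.mul_assoc P, hPQ, Matrix.one_mul]

end Matrix

theorem stmt_7 {n r : Type*} [Fintype n] [Fintype r] [DecidableEq r]
    (U L : Matrix n r ℝ) (g : r → ℝ) (hg : ∀ i, 0 < g i)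
    (hU : Uᵀ * U = 1)
    (hlt : specNorm ((L - U * Matrix.diagonal g) * Matrix.diagonal (fun i => (g i)⁻¹)) < 1) :
    L.rank = Fintype.card r ∧
    specNorm (L * (Lᵀ * L)⁻¹ * Matrix.diagonal g) ≤
      1 / (1 - specNorm ((L - U * Matrix.diagonal g) * Matrix.diagonal (fun i => (g i)⁻¹))) := by
  set P := diagonal fun i ↦ (g i)⁻¹
  set E := (L - U * diagonal g) * P
  have hgP : diagonal g * P = 1 := by
    simp [P, diagonal_mul_diagonal, mul_inv_cancel₀ (hg _).ne']
  have hLP : L * P = U + E := by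
    simp only [E]
    rw [Matrix.sub_mul, Matrix.mul_assoc, hgP, Matrix.mul_one, add_sub_cancel]
  have hc : 0 < 1 - ‖E‖ := by rwa [sub_pos, ← specNorm_eq_l2_opNorm]
  have hlow (x : r → ℝ) : (1 - ‖E‖) * ‖toLp 2 x‖ ≤ ‖toLp 2 ((L * P) *ᵥ x)‖ := by
    rw [hLP]
    exact sub_norm_mul_norm_le_norm_add_mulVec (by simpa using hU) E x
  constructor
  · rw [← rank_mul_eq_left_of_isUnit_det P L (isUnit_det_of_left_inverse hgP),
      rank_eq_card_of_injective_mulVec (mulVec_injective_of_norm_le hc hlow)]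
  · have key := l2_opNorm_mul_inv_conjTranspose_mul_self_le hc hlow
    rw [mul_inv_conjTranspose_mul_self_of_mul_eq_one L (mul_eq_one_comm.mp hgP)] at key
    simpa [specNorm_eq_l2_opNorm, one_div] using key
end

section
/- Let L_♯, L_⋆ ∈ ℝ^{n×r} with L_⋆ = U_⋆·G^{1/2} where U_⋆ has orthonormal columns and G is r×r positive definite diagonal, and Δ = L_♯ − L_⋆ with ε := ‖Δ·G^{−1/2}‖ < 1. Then ‖L_♯·(L_♯ᴴ·L_♯)^{−1}·G^{1/2} − U_⋆‖ ≤ √2·ε/(1 − ε). -/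
open Matrix BigOperators

/-! ### Auxiliary machinery for `specNorm` -/

noncomputable def nsq {m : Type*} [Fintype m] (x : m → ℝ) : ℝ := x ⬝ᵥ x
noncomputable def en {m : Type*} [Fintype m] (x : m → ℝ) : ℝ := Real.sqrt (nsq x)

section EnBasic
variable {m : Type*} [Fintype m]

lemma nsq_nonneg (x : m → ℝ) : 0 ≤ nsq x :=
  Finset.sum_nonneg fun i _ => mul_self_nonneg _

lemma en_nonneg (x : m → ℝ) : 0 ≤ en x := Real.sqrt_nonneg _
lemma en_sq (x : m → ℝ) : en x ^ 2 = nsq x := Real.sq_sqrt (nsq_nonneg x)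

lemma en_eq_norm (x : m → ℝ) : en x = ‖(WithLp.equiv 2 (m → ℝ)).symm x‖ := by
  rw [EuclideanSpace.norm_eq]
  unfold en nsq dotProduct
  congr 1
  apply Finset.sum_congr rfl
  intro i _
  simp [WithLp.equiv_symm_apply, PiLp.toLp_apply, sq, abs_mul_abs_self]

lemma dot_eq_inner' (x y : m → ℝ) :
    x ⬝ᵥ y = (inner ℝ ((WithLp.equiv 2 (m → ℝ)).symm x) ((WithLp.equiv 2 (m → ℝ)).symm y) : ℝ) := by
  rw [PiLp.inner_apply]
  simp [dotProduct, mul_comm]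

lemma en_add_le (x y : m → ℝ) : en (x + y) ≤ en x + en y := by
  simp only [en_eq_norm]
  exact norm_add_le _ _

lemma dot_le_en (x y : m → ℝ) : x ⬝ᵥ y ≤ en x * en y := by
  rw [dot_eq_inner', en_eq_norm, en_eq_norm]
  exact real_inner_le_norm _ _

end EnBasic

section Spectral
variable {q : Type*} [Fintype q] [DecidableEq q]

lemma repr_eq_dot (B : Matrix q q ℝ) (hB : B.IsHermitian) (x : q → ℝ) (i : q) :
    hB.eigenvectorBasis.repr ((WithLp.equiv 2 (q → ℝ)).symm x) i
      = (hB.eigenvectorBasis i : q → ℝ) ⬝ᵥ x := by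
  rw [hB.eigenvectorBasis.repr_apply_apply]
  exact (dot_eq_inner' _ _).symm

lemma quad_eq (B : Matrix q q ℝ) (hB : B.IsHermitian) (x : q → ℝ) :
    x ⬝ᵥ (B *ᵥ x) = ∑ i, hB.eigenvalues i * ((hB.eigenvectorBasis i : q → ℝ) ⬝ᵥ x) ^ 2 := by
  have hBt : Bᵀ = B := by
    have := hB.eq
    rwa [conjTranspose_eq_transpose_of_trivial] at this
  set v := hB.eigenvectorBasis with hv
  have hry : ∀ i, v.repr ((WithLp.equiv 2 (q → ℝ)).symm (B *ᵥ x)) i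
      = hB.eigenvalues i * ((v i : q → ℝ) ⬝ᵥ x) := by
    intro i
    rw [repr_eq_dot B hB (B *ᵥ x) i]
    have hmv : B *ᵥ (v i : q → ℝ) = hB.eigenvalues i • (v i : q → ℝ) :=
      hB.mulVec_eigenvectorBasis i
    rw [dotProduct_mulVec, ← mulVec_transpose, hBt, hmv]
    exact smul_dotProduct _ _ _
  calc x ⬝ᵥ (B *ᵥ x)
      = (inner ℝ ((WithLp.equiv 2 (q → ℝ)).symm x) ((WithLp.equiv 2 (q → ℝ)).symm (B *ᵥ x)) : ℝ) :=
        dot_eq_inner' _ _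
    _ = (inner ℝ (v.repr ((WithLp.equiv 2 (q → ℝ)).symm x))
          (v.repr ((WithLp.equiv 2 (q → ℝ)).symm (B *ᵥ x))) : ℝ) :=
        (v.repr.inner_map_map _ _).symm
    _ = ∑ i, v.repr ((WithLp.equiv 2 (q → ℝ)).symm x) i
          * v.repr ((WithLp.equiv 2 (q → ℝ)).symm (B *ᵥ x)) i := by
        rw [PiLp.inner_apply]; simp [mul_comm]
    _ = _ := by
        apply Finset.sum_congr rfl
        intro i _
        rw [repr_eq_dot, hry]; ring

lemma parseval (B : Matrix q q ℝ) (hB : B.IsHermitian) (x : q → ℝ) :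
    x ⬝ᵥ x = ∑ i, ((hB.eigenvectorBasis i : q → ℝ) ⬝ᵥ x) ^ 2 := by
  set v := hB.eigenvectorBasis with hv
  calc x ⬝ᵥ x
      = (inner ℝ ((WithLp.equiv 2 (q → ℝ)).symm x) ((WithLp.equiv 2 (q → ℝ)).symm x) : ℝ) :=
        dot_eq_inner' _ _
    _ = (inner ℝ (v.repr ((WithLp.equiv 2 (q → ℝ)).symm x))
          (v.repr ((WithLp.equiv 2 (q → ℝ)).symm x)) : ℝ) :=
        (v.repr.inner_map_map _ _).symm
    _ = ∑ i, v.repr ((WithLp.equiv 2 (q → ℝ)).symm x) i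
          * v.repr ((WithLp.equiv 2 (q → ℝ)).symm x) i := by
        rw [PiLp.inner_apply]; simp [mul_comm, sq]
    _ = _ := by
        apply Finset.sum_congr rfl
        intro i _
        rw [repr_eq_dot]; ring

end Spectral

section SpecNorm
variable {m q : Type*} [Fintype m] [Fintype q] [DecidableEq q]

lemma nsq_mulVec (A : Matrix m q ℝ) (x : q → ℝ) :
    nsq (A *ᵥ x) = x ⬝ᵥ ((Aᵀ * A) *ᵥ x) := by
  show (A *ᵥ x) ⬝ᵥ (A *ᵥ x) = _
  rw [← mulVec_mulVec, dotProduct_mulVec x Aᵀ, vecMul_transpose]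

lemma nsq_mulVec' (A : Matrix m q ℝ) (x : q → ℝ) :
    nsq (A *ᵥ x) = x ⬝ᵥ ((Aᴴ * A) *ᵥ x) := by
  rw [conjTranspose_eq_transpose_of_trivial]; exact nsq_mulVec A x

lemma basis_dot_self (B : Matrix q q ℝ) (hB : B.IsHermitian) (i : q) :
    ((hB.eigenvectorBasis i : q → ℝ) ⬝ᵥ (hB.eigenvectorBasis i : q → ℝ)) = 1 := by
  rw [dot_eq_inner']
  have h1 : ‖hB.eigenvectorBasis i‖ = 1 := hB.eigenvectorBasis.orthonormal.1 i
  have h2 : (inner ℝ (hB.eigenvectorBasis i) (hB.eigenvectorBasis i) : ℝ) = 1 := by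
    rw [real_inner_self_eq_norm_mul_norm, h1, mul_one]
  exact h2

lemma eig_nonneg (A : Matrix m q ℝ) (i : q) :
    0 ≤ (Matrix.isHermitian_conjTranspose_mul_self A).eigenvalues i := by
  set hB := Matrix.isHermitian_conjTranspose_mul_self A
  have h := nsq_mulVec' A (hB.eigenvectorBasis i : q → ℝ)
  have hmv : (Aᴴ * A) *ᵥ (hB.eigenvectorBasis i : q → ℝ)
      = hB.eigenvalues i • (hB.eigenvectorBasis i : q → ℝ) := hB.mulVec_eigenvectorBasis i
  rw [hmv, dotProduct_smul, smul_eq_mul, basis_dot_self _ hB, mul_one] at h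
  rw [← h]; exact nsq_nonneg _

lemma sup_eig_nonneg (A : Matrix m q ℝ) :
    0 ≤ ⨆ i, (Matrix.isHermitian_conjTranspose_mul_self A).eigenvalues i := by
  cases isEmpty_or_nonempty q with
  | inl h => rw [Real.iSup_of_isEmpty]
  | inr h =>
    exact le_trans (eig_nonneg A (Classical.arbitrary q))
      (le_ciSup (Set.Finite.bddAbove (Set.finite_range _)) _)

lemma spec_sq (A : Matrix m q ℝ) :
    specNorm A ^ 2 = ⨆ i, (Matrix.isHermitian_conjTranspose_mul_self A).eigenvalues i :=
  Real.sq_sqrt (sup_eig_nonneg A)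

lemma spec_nonneg (A : Matrix m q ℝ) : 0 ≤ specNorm A := Real.sqrt_nonneg _

lemma nsq_mulVec_le (A : Matrix m q ℝ) (x : q → ℝ) :
    nsq (A *ᵥ x) ≤ specNorm A ^ 2 * nsq x := by
  set hB := Matrix.isHermitian_conjTranspose_mul_self A
  rw [nsq_mulVec', quad_eq _ hB, spec_sq]
  have hps : nsq x = ∑ i, ((hB.eigenvectorBasis i : q → ℝ) ⬝ᵥ x) ^ 2 := parseval _ hB x
  rw [hps, Finset.mul_sum]
  apply Finset.sum_le_sum
  intro i _
  exact mul_le_mul_of_nonneg_right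
    (le_ciSup (Set.Finite.bddAbove (Set.finite_range _)) i) (sq_nonneg _)

lemma en_mulVec_le (A : Matrix m q ℝ) (x : q → ℝ) :
    en (A *ᵥ x) ≤ specNorm A * en x := by
  have h := nsq_mulVec_le A x
  have h2 : en (A *ᵥ x) = Real.sqrt (nsq (A *ᵥ x)) := rfl
  rw [h2]
  calc Real.sqrt (nsq (A *ᵥ x)) ≤ Real.sqrt (specNorm A ^ 2 * nsq x) := Real.sqrt_le_sqrt h
    _ = specNorm A * en x := by
        rw [Real.sqrt_mul (sq_nonneg _), Real.sqrt_sq (spec_nonneg A)]; rfl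

lemma spec_le (A : Matrix m q ℝ) (c : ℝ) (hc : 0 ≤ c)
    (h : ∀ x, en (A *ᵥ x) ≤ c * en x) : specNorm A ≤ c := by
  set hB := Matrix.isHermitian_conjTranspose_mul_self A
  have key : (⨆ i, hB.eigenvalues i) ≤ c ^ 2 := by
    cases isEmpty_or_nonempty q with
    | inl hq => rw [Real.iSup_of_isEmpty]; positivity
    | inr hq =>
      apply ciSup_le
      intro i
      have hmv : (Aᴴ * A) *ᵥ (hB.eigenvectorBasis i : q → ℝ)
          = hB.eigenvalues i • (hB.eigenvectorBasis i : q → ℝ) := hB.mulVec_eigenvectorBasis i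
      have h1 : nsq (A *ᵥ (hB.eigenvectorBasis i : q → ℝ)) = hB.eigenvalues i := by
        rw [nsq_mulVec', hmv, dotProduct_smul, smul_eq_mul, basis_dot_self _ hB, mul_one]
      have h2 : en ((hB.eigenvectorBasis i : q → ℝ)) = 1 := by
        show Real.sqrt _ = 1
        have : nsq ((hB.eigenvectorBasis i : q → ℝ)) = 1 := basis_dot_self _ hB i
        rw [this, Real.sqrt_one]
      have h3 := h (hB.eigenvectorBasis i : q → ℝ)
      rw [h2, mul_one] at h3
      have h4 : en (A *ᵥ (hB.eigenvectorBasis i : q → ℝ)) ^ 2 ≤ c ^ 2 :=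
        pow_le_pow_left₀ (en_nonneg _) h3 2
      rwa [en_sq, h1] at h4
  calc specNorm A = Real.sqrt (⨆ i, hB.eigenvalues i) := rfl
    _ ≤ Real.sqrt (c ^ 2) := Real.sqrt_le_sqrt key
    _ = c := Real.sqrt_sq hc

lemma spec_transpose_le (A : Matrix m q ℝ) [DecidableEq m] : specNorm Aᵀ ≤ specNorm A := by
  apply spec_le _ _ (spec_nonneg A)
  intro x
  have hd : nsq (Aᵀ *ᵥ x) = x ⬝ᵥ (A *ᵥ (Aᵀ *ᵥ x)) := by
    show (Aᵀ *ᵥ x) ⬝ᵥ (Aᵀ *ᵥ x) = _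
    rw [dotProduct_mulVec x A, dotProduct_comm]
    congr 1
    rw [← mulVec_transpose]
  have hcs : x ⬝ᵥ (A *ᵥ (Aᵀ *ᵥ x)) ≤ en x * en (A *ᵥ (Aᵀ *ᵥ x)) := dot_le_en _ _
  have hrec : en (A *ᵥ (Aᵀ *ᵥ x)) ≤ specNorm A * en (Aᵀ *ᵥ x) := en_mulVec_le A _
  have key : en (Aᵀ *ᵥ x) ^ 2 ≤ en x * (specNorm A * en (Aᵀ *ᵥ x)) := by
    rw [en_sq, hd]
    calc x ⬝ᵥ (A *ᵥ (Aᵀ *ᵥ x)) ≤ en x * en (A *ᵥ (Aᵀ *ᵥ x)) := hcs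
      _ ≤ en x * (specNorm A * en (Aᵀ *ᵥ x)) :=
        mul_le_mul_of_nonneg_left hrec (en_nonneg x)
  rcases eq_or_lt_of_le (en_nonneg (Aᵀ *ᵥ x)) with h0 | h0
  · rw [← h0]
    exact mul_nonneg (spec_nonneg A) (en_nonneg x)
  · nlinarith [key, h0]

lemma spec_transpose (A : Matrix m q ℝ) [DecidableEq m] : specNorm Aᵀ = specNorm A :=
  le_antisymm (spec_transpose_le A) (by
    have h := spec_transpose_le Aᵀ
    rwa [transpose_transpose] at h)

end SpecNorm

section help
variable {m : Type*} [Fintype m]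

lemma en_def (x : m → ℝ) : en x = Real.sqrt (nsq x) := rfl

lemma en_neg (x : m → ℝ) : en (-x) = en x := by
  unfold en nsq; rw [neg_dotProduct, dotProduct_neg, neg_neg]

lemma nsq_eq_zero {x : m → ℝ} (h : nsq x = 0) : x = 0 :=
  dotProduct_self_eq_zero.mp h

lemma en_mono {x y : m → ℝ} (h : nsq x ≤ nsq y) : en x ≤ en y := Real.sqrt_le_sqrt h

lemma pythag {x y : m → ℝ} (h : x ⬝ᵥ y = 0) : nsq (x + y) = nsq x + nsq y := by
  unfold nsq
  rw [add_dotProduct, dotProduct_add, dotProduct_add, dotProduct_comm y x, h]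
  ring
end help

set_option maxHeartbeats 2000000 in
theorem stmt_8 {n r : Type*} [Fintype n] [Fintype r] [DecidableEq r]
    (U L : Matrix n r ℝ) (g : r → ℝ) (hg : ∀ i, 0 < g i)
    (hU : Uᵀ * U = 1) (ε : ℝ)
    (hε : specNorm ((L - U * Matrix.diagonal g) * Matrix.diagonal (fun i => (g i)⁻¹)) = ε)
    (hε1 : ε < 1) :
    specNorm (L * (Lᵀ * L)⁻¹ * Matrix.diagonal g - U) ≤ Real.sqrt 2 * ε / (1 - ε) := by
  classical
  set D : Matrix r r ℝ := Matrix.diagonal g with hD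
  set Di : Matrix r r ℝ := Matrix.diagonal (fun i => (g i)⁻¹) with hDi
  set E : Matrix n r ℝ := (L - U * D) * Di with hE
  set M : Matrix n r ℝ := L * Di with hM
  set N : Matrix r r ℝ := Mᵀ * M with hN
  have hεnn : 0 ≤ ε := hε ▸ spec_nonneg _
  have h1ε : (0:ℝ) < 1 - ε := by linarith
  -- diagonal inverses
  have hDDi : D * Di = 1 := by
    rw [hD, hDi, diagonal_mul_diagonal]
    convert diagonal_one with i
    exact mul_inv_cancel₀ (ne_of_gt (hg i))
  have hDiD : Di * D = 1 := by
    rw [hD, hDi, diagonal_mul_diagonal]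
    convert diagonal_one with i
    exact inv_mul_cancel₀ (ne_of_gt (hg i))
  have hDt : Dᵀ = D := diagonal_transpose g
  have hDit : Diᵀ = Di := diagonal_transpose _
  -- M = U + E
  have hMUE : M = U + E := by
    rw [hM, hE, Matrix.sub_mul, Matrix.mul_assoc, hDDi, Matrix.mul_one]
    abel
  have hUME : U = M - E := by rw [hMUE]; abel
  -- basic en facts
  have hUen : ∀ x, en (U *ᵥ x) = en x := by
    intro x
    rw [en_def, en_def, nsq_mulVec, hU, one_mulVec]
    rfl
  have hEen : ∀ x, en (E *ᵥ x) ≤ ε * en x := by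
    intro x
    have h := en_mulVec_le E x
    rwa [hε] at h
  have hlow : ∀ x, (1 - ε) * en x ≤ en (M *ᵥ x) := by
    intro x
    have h1 : en (U *ᵥ x) ≤ en (M *ᵥ x) + en (E *ᵥ x) := by
      have hrw : (U : Matrix n r ℝ) *ᵥ x = M *ᵥ x + -(E *ᵥ x) := by
        rw [hUME, sub_mulVec]; abel
      rw [hrw]
      calc en (M *ᵥ x + -(E *ᵥ x)) ≤ en (M *ᵥ x) + en (-(E *ᵥ x)) := en_add_le _ _
        _ = en (M *ᵥ x) + en (E *ᵥ x) := by rw [en_neg]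
    have h2 := hEen x
    have h3 := hUen x
    nlinarith [en_nonneg x]
  -- N is invertible
  have hMz : ∀ z, en (M *ᵥ z) = 0 → z = 0 := by
    intro z hz
    have h3 := hlow z
    rw [hz] at h3
    have h4 : en z = 0 := le_antisymm (by nlinarith) (en_nonneg z)
    have h6 : nsq z = 0 := by rw [← en_sq, h4]; ring
    exact nsq_eq_zero h6
  have hNdet : IsUnit N.det := by
    have hinj : Function.Injective N.mulVec := by
      have hker : ∀ z, N *ᵥ z = 0 → z = 0 := by
        intro z hz
        apply hMz
        have h1 : nsq (M *ᵥ z) = 0 := by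
          rw [nsq_mulVec, ← hN, hz, dotProduct_zero]
        rw [en_def, h1, Real.sqrt_zero]
      intro a b hab
      have h := hker (a - b) (by rw [mulVec_sub, hab, sub_self])
      exact sub_eq_zero.mp h
    exact (Matrix.isUnit_iff_isUnit_det N).mp (mulVec_injective_iff_isUnit.mp hinj)
  have hNNi : N * N⁻¹ = 1 := mul_nonsing_inv N hNdet
  have hNiN : N⁻¹ * N = 1 := nonsing_inv_mul N hNdet
  have hNt : Nᵀ = N := by rw [hN, Matrix.transpose_mul, transpose_transpose]
  have hNit : (N⁻¹)ᵀ = N⁻¹ := by rw [transpose_nonsing_inv, hNt]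
  -- L = M * D and inverse formulas
  have hLMD : L = M * D := by rw [hM, Matrix.mul_assoc, hDiD, Matrix.mul_one]
  have hLL : Lᵀ * L = D * N * D := by
    rw [hN]
    conv_lhs => rw [hLMD]
    rw [Matrix.transpose_mul, hDt]
    simp only [Matrix.mul_assoc]
  have hLLinv : (Lᵀ * L)⁻¹ = Di * N⁻¹ * Di := by
    apply inv_eq_right_inv
    rw [hLL]
    calc D * N * D * (Di * N⁻¹ * Di)
        = D * N * (D * Di) * N⁻¹ * Di := by simp only [Matrix.mul_assoc]
      _ = D * (N * N⁻¹) * Di := by rw [hDDi]; simp only [Matrix.mul_one, Matrix.mul_assoc]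
      _ = D * Di := by rw [hNNi, Matrix.mul_one]
      _ = 1 := hDDi
  have hXD : L * (Lᵀ * L)⁻¹ * D = M * N⁻¹ := by
    rw [hLLinv]
    conv_lhs => rw [hLMD]
    calc M * D * (Di * N⁻¹ * Di) * D
        = M * (D * Di) * N⁻¹ * (Di * D) := by simp only [Matrix.mul_assoc]
      _ = M * N⁻¹ := by rw [hDDi, hDiD, Matrix.mul_one, Matrix.mul_one]
  set P : Matrix n n ℝ := M * N⁻¹ * Mᵀ with hP
  have hXLt : L * (Lᵀ * L)⁻¹ * Lᵀ = P := by
    rw [hLLinv, hP]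
    conv_lhs => rw [hLMD]
    rw [Matrix.transpose_mul, hDt]
    calc M * D * (Di * N⁻¹ * Di) * (D * Mᵀ)
        = M * (D * Di) * N⁻¹ * (Di * D) * Mᵀ := by simp only [Matrix.mul_assoc]
      _ = M * N⁻¹ * Mᵀ := by
          rw [hDDi, hDiD, Matrix.mul_one, Matrix.mul_one]
  have hPt : Pᵀ = P := by
    rw [hP]
    simp only [Matrix.transpose_mul, transpose_transpose, hNit, Matrix.mul_assoc]
  have hPP : P * P = P := by
    rw [hP]
    calc M * N⁻¹ * Mᵀ * (M * N⁻¹ * Mᵀ)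
        = M * N⁻¹ * (Mᵀ * M) * N⁻¹ * Mᵀ := by simp only [Matrix.mul_assoc]
      _ = M * (N⁻¹ * N) * N⁻¹ * Mᵀ := by rw [← hN]; simp only [Matrix.mul_assoc]
      _ = M * N⁻¹ * Mᵀ := by rw [hNiN, Matrix.mul_one]
  have hPMNi : P * (M * N⁻¹) = M * N⁻¹ := by
    rw [hP]
    calc M * N⁻¹ * Mᵀ * (M * N⁻¹)
        = M * N⁻¹ * (Mᵀ * M) * N⁻¹ := by simp only [Matrix.mul_assoc]
      _ = M * (N⁻¹ * N) * N⁻¹ := by rw [← hN]; simp only [Matrix.mul_assoc]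
      _ = M * N⁻¹ := by rw [hNiN, Matrix.mul_one]
  -- the decomposition
  set A₁ : Matrix n r ℝ := -(M * N⁻¹ * Eᵀ * U) with hA₁
  set A₂ : Matrix n r ℝ := (1 - P) * E with hA₂
  have hkey : Eᵀ * U + Mᵀ * E = N - 1 := by
    have h1 : (M - E)ᵀ * (M - E) = 1 := by rw [← hUME]; exact hU
    rw [Matrix.transpose_sub, Matrix.sub_mul, Matrix.mul_sub, Matrix.mul_sub] at h1
    have h2 : Eᵀ * U = Eᵀ * M - Eᵀ * E := by rw [hUME, Matrix.mul_sub]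
    rw [h2, hN]
    calc Eᵀ * M - Eᵀ * E + Mᵀ * E
        = Mᵀ * M - (Mᵀ * M - Mᵀ * E - (Eᵀ * M - Eᵀ * E)) := by abel
      _ = Mᵀ * M - 1 := by rw [h1]
  have hdecomp : L * (Lᵀ * L)⁻¹ * D - U = A₁ + A₂ := by
    have e1 : (1 - P) * E = E - M * N⁻¹ * (Mᵀ * E) := by
      rw [Matrix.sub_mul, Matrix.one_mul, hP]
      simp only [Matrix.mul_assoc]
    have e2 : M * N⁻¹ * Eᵀ * U = M * N⁻¹ * (Eᵀ * U) := by simp only [Matrix.mul_assoc]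
    rw [hXD, hA₁, hA₂, e1, e2]
    have h3 : M * N⁻¹ * (Eᵀ * U) + M * N⁻¹ * (Mᵀ * E) = M * N⁻¹ * (N - 1) := by
      rw [← Matrix.mul_add, hkey]
    have h4 : M * N⁻¹ * (N - 1) = M - M * N⁻¹ := by
      rw [Matrix.mul_sub, Matrix.mul_one, Matrix.mul_assoc, hNiN, Matrix.mul_one]
    have h34 : M * N⁻¹ * (Eᵀ * U) + M * N⁻¹ * (Mᵀ * E) = M - M * N⁻¹ := h3.trans h4
    have goal_eq : -(M * N⁻¹ * (Eᵀ * U)) + (E - M * N⁻¹ * (Mᵀ * E))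
        = -(M * N⁻¹ * (Eᵀ * U) + M * N⁻¹ * (Mᵀ * E)) + E := by abel
    rw [goal_eq, h34, hUME]
    abel
  -- norm bound for M * N⁻¹
  have hMNi : ∀ y, en ((M * N⁻¹) *ᵥ y) * (1 - ε) ≤ en y := by
    intro y
    have hz : (M * N⁻¹) *ᵥ y = M *ᵥ (N⁻¹ *ᵥ y) := by rw [← mulVec_mulVec]
    set z := N⁻¹ *ᵥ y with hzdef
    have hyz : N *ᵥ z = y := by rw [hzdef, mulVec_mulVec, hNNi, one_mulVec]
    have h1 : en (M *ᵥ z) ^ 2 ≤ en z * en (N *ᵥ z) := by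
      rw [en_sq, nsq_mulVec, ← hN]; exact dot_le_en z (N *ᵥ z)
    have h2 := hlow z
    have h3 : en (M *ᵥ z) * (1 - ε) ≤ en (N *ᵥ z) := by
      rcases eq_or_lt_of_le (en_nonneg (M *ᵥ z)) with h0 | h0
      · rw [← h0, zero_mul]; exact en_nonneg _
      · nlinarith [mul_le_mul_of_nonneg_right h2 (en_nonneg (N *ᵥ z)),
          mul_le_mul_of_nonneg_left h1 (le_of_lt h1ε), h0]
    rw [hz, ← hyz]
    exact h3
  -- bound for A₁
  have hb1 : ∀ x, en (A₁ *ᵥ x) * (1 - ε) ≤ ε * en x := by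
    intro x
    have hrw : A₁ *ᵥ x = -((M * N⁻¹) *ᵥ (Eᵀ *ᵥ (U *ᵥ x))) := by
      rw [hA₁, neg_mulVec, mulVec_mulVec, mulVec_mulVec]
    rw [hrw, en_neg]
    have hEt : en (Eᵀ *ᵥ (U *ᵥ x)) ≤ ε * en x := by
      calc en (Eᵀ *ᵥ (U *ᵥ x)) ≤ specNorm Eᵀ * en (U *ᵥ x) := en_mulVec_le _ _
        _ = ε * en x := by rw [spec_transpose, hε, hUen]
    calc en ((M * N⁻¹) *ᵥ (Eᵀ *ᵥ (U *ᵥ x))) * (1 - ε) ≤ en (Eᵀ *ᵥ (U *ᵥ x)) := hMNi _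
      _ ≤ ε * en x := hEt
  -- bound for A₂
  have hcontr : ∀ y, en ((1 - P) *ᵥ y) ≤ en y := by
    intro y
    have hQ : (1 - P)ᵀ * (1 - P) = 1 - P := by
      rw [Matrix.transpose_sub, transpose_one, hPt, Matrix.sub_mul, Matrix.one_mul,
        Matrix.mul_sub, Matrix.mul_one, hPP]
      abel
    have hPy : (0:ℝ) ≤ y ⬝ᵥ (P *ᵥ y) := by
      have : nsq (P *ᵥ y) = y ⬝ᵥ (P *ᵥ y) := by
        rw [nsq_mulVec, hPt, hPP]
      rw [← this]; exact nsq_nonneg _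
    apply en_mono
    rw [nsq_mulVec, hQ, Matrix.sub_mulVec, one_mulVec, dotProduct_sub]
    have : nsq y = y ⬝ᵥ y := rfl
    rw [this]
    linarith
  have hb2 : ∀ x, en (A₂ *ᵥ x) ≤ ε * en x := by
    intro x
    have hrw : A₂ *ᵥ x = (1 - P) *ᵥ (E *ᵥ x) := by rw [hA₂, mulVec_mulVec]
    rw [hrw]
    calc en ((1 - P) *ᵥ (E *ᵥ x)) ≤ en (E *ᵥ x) := hcontr _
      _ ≤ ε * en x := hEen x
  -- orthogonality
  have horth : ∀ x, (A₁ *ᵥ x) ⬝ᵥ (A₂ *ᵥ x) = 0 := by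
    intro x
    have hPA₁ : P * A₁ = A₁ := by
      rw [hA₁, Matrix.mul_neg]
      congr 1
      have e : P * (M * N⁻¹ * Eᵀ * U) = P * (M * N⁻¹) * Eᵀ * U := by
        simp only [Matrix.mul_assoc]
      rw [e, hPMNi]
    have hPA₂ : P * A₂ = 0 := by
      rw [hA₂, ← Matrix.mul_assoc, Matrix.mul_sub, Matrix.mul_one, hPP, sub_self,
        Matrix.zero_mul]
    have ha : A₁ *ᵥ x = P *ᵥ (A₁ *ᵥ x) := by rw [mulVec_mulVec, hPA₁]
    have hb : P *ᵥ (A₂ *ᵥ x) = 0 := by rw [mulVec_mulVec, hPA₂, zero_mulVec]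
    rw [ha, dotProduct_comm, dotProduct_mulVec, ← mulVec_transpose, hPt, hb,
      zero_dotProduct]
  -- final assembly
  have hc : 0 ≤ Real.sqrt 2 * ε / (1 - ε) :=
    div_nonneg (mul_nonneg (Real.sqrt_nonneg 2) hεnn) (le_of_lt h1ε)
  refine spec_le _ _ hc ?_
  intro x
  rw [hdecomp, add_mulVec]
  set a := A₁ *ᵥ x with hadef
  set b := A₂ *ᵥ x with hbdef
  have p := pythag (horth x)
  have ha1 := hb1 x
  have hb1' := hb2 x
  rw [← hadef] at ha1
  rw [← hbdef] at hb1'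
  have ha2 : (en a * (1 - ε)) ^ 2 ≤ (ε * en x) ^ 2 :=
    pow_le_pow_left₀ (mul_nonneg (en_nonneg a) (le_of_lt h1ε)) ha1 2
  have hb2' : en b ^ 2 ≤ (ε * en x) ^ 2 :=
    pow_le_pow_left₀ (en_nonneg b) hb1' 2
  have hsq1 : (1 - ε) ^ 2 ≤ 1 := by nlinarith
  have key2 : (en (a + b) * (1 - ε)) ^ 2 ≤ (Real.sqrt 2 * (ε * en x)) ^ 2 := by
    have e1 : (en (a + b) * (1 - ε)) ^ 2 = (en a ^ 2 + en b ^ 2) * (1 - ε) ^ 2 := by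
      rw [mul_pow, en_sq, p, ← en_sq a, ← en_sq b]
    have e2 : (Real.sqrt 2 * (ε * en x)) ^ 2 = 2 * (ε * en x) ^ 2 := by
      rw [mul_pow, Real.sq_sqrt (by norm_num : (2:ℝ) ≥ 0)]
    rw [e1, e2]
    nlinarith [ha2, hb2', hsq1, sq_nonneg (en b), sq_nonneg (ε * en x),
      mul_le_mul_of_nonneg_left hsq1 (sq_nonneg (en b))]
  have key3 : en (a + b) * (1 - ε) ≤ Real.sqrt 2 * (ε * en x) := by
    have h := Real.sqrt_le_sqrt key2
    rwa [Real.sqrt_sq (mul_nonneg (en_nonneg _) (le_of_lt h1ε)),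
      Real.sqrt_sq (mul_nonneg (Real.sqrt_nonneg 2) (mul_nonneg hεnn (en_nonneg x)))] at h
  rw [div_mul_eq_mul_div, le_div_iff₀ h1ε]
  calc en (a + b) * (1 - ε) ≤ Real.sqrt 2 * (ε * en x) := key3
    _ = Real.sqrt 2 * ε * en x := by ring
end

section
/- Let L_⋆, R_⋆, L_♯, R_♯ be matrices (L's are n₁×r, R's are n₂×r) with L_⋆ = U_⋆ G^{1/2}, R_⋆ = V_⋆ G^{1/2} where U_⋆, V_⋆ have orthonormal columns and G is positive definite diagonal. Set Δ_L = L_♯ − L_⋆ and Δ_R = R_♯ − R_⋆. Then ‖L_♯ R_♯ᴴ − L_⋆ R_⋆ᴴ‖_F ≤ (1 + (1/2)·max(‖Δ_L G^{−1/2}‖, ‖Δ_R G^{−1/2}‖)) · (‖Δ_L G^{1/2}‖_F + ‖Δ_R G^{1/2}‖_F). -/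
open Matrix BigOperators

/-! With `ΔL = L - U D` and `ΔR = R - V D`, the error `L Rᵀ - (U D)(V D)ᵀ` splits as
`ΔL (V D)ᵀ + (U D) ΔRᵀ + ΔL ΔRᵀ`. Since `U` and `V` have orthonormal columns, the two first-order
terms have Frobenius norms `‖ΔL Dᵀ‖_F` and `‖ΔR Dᵀ‖_F`. Inserting `D⁻¹ D` writes the second-order
term as `(ΔL D⁻¹)(ΔR Dᵀ)ᵀ`, and also (after transposing) as `(ΔR D⁻¹)(ΔL Dᵀ)ᵀ`; the estimate
`‖X Y‖_F ≤ ‖X‖ ‖Y‖_F` bounds it by `‖ΔL D⁻¹‖ ‖ΔR Dᵀ‖_F` and by `‖ΔR D⁻¹‖ ‖ΔL Dᵀ‖_F`, and averaging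
the two bounds gives the factor `1 / 2`. -/

section Frobenius

variable {m n p : Type*} [Fintype m] [Fintype n] [Fintype p]

attribute [local instance] Matrix.frobeniusNormedAddCommGroup

lemma frob_eq_norm (A : Matrix m n ℝ) : frob A = ‖A‖ := by
  rw [frobenius_norm_def, frob, Real.sqrt_eq_rpow]
  simp [sq_abs]

lemma frob_nonneg (A : Matrix m n ℝ) : 0 ≤ frob A := Real.sqrt_nonneg _

lemma frob_add_le (A B : Matrix m n ℝ) : frob (A + B) ≤ frob A + frob B := by
  simpa only [frob_eq_norm] using norm_add_le A B

lemma frob_transpose (A : Matrix m n ℝ) : frob Aᵀ = frob A := by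
  rw [frob, frob, Finset.sum_comm]
  rfl

lemma frob_sq (A : Matrix m n ℝ) : frob A ^ 2 = trace (Aᵀ * A) := by
  rw [frob, Real.sq_sqrt (by positivity), Finset.sum_comm]
  simp [trace, mul_apply, sq]

lemma frob_eq_sqrt_trace (A : Matrix m n ℝ) : frob A = Real.sqrt (trace (Aᵀ * A)) := by
  rw [← frob_sq, Real.sqrt_sq (frob_nonneg A)]

lemma frob_mul_of_transpose_mul_self_eq_one [DecidableEq p] {U : Matrix m p ℝ}
    (hU : Uᵀ * U = 1) (B : Matrix p n ℝ) : frob (U * B) = frob B := by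
  rw [frob_eq_sqrt_trace, frob_eq_sqrt_trace, transpose_mul, Matrix.mul_assoc,
    ← Matrix.mul_assoc Uᵀ, hU, Matrix.one_mul]

lemma frob_mul_transpose_of_transpose_mul_self_eq_one [DecidableEq p] {V : Matrix n p ℝ}
    (hV : Vᵀ * V = 1) (A : Matrix m p ℝ) : frob (A * Vᵀ) = frob A := by
  rw [← frob_transpose, transpose_mul, transpose_transpose,
    frob_mul_of_transpose_mul_self_eq_one hV, frob_transpose]

end Frobenius

section Spectral

variable {m n p : Type*} [Fintype m] [Fintype n] [Fintype p] [DecidableEq n]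

lemma specNorm_nonneg (A : Matrix m n ℝ) : 0 ≤ specNorm A := Real.sqrt_nonneg _

lemma specNorm_sq (A : Matrix m n ℝ) :
    specNorm A ^ 2 = ⨆ i, (isHermitian_conjTranspose_mul_self A).eigenvalues i :=
  Real.sq_sqrt <| Real.iSup_nonneg (eigenvalues_conjTranspose_mul_self_nonneg A)

open scoped MatrixOrder in
lemma transpose_mul_self_le_specNorm_sq (A : Matrix m n ℝ) :
    Aᵀ * A ≤ algebraMap ℝ _ (specNorm A ^ 2) := by
  have hA := isHermitian_conjTranspose_mul_self A
  rw [← conjTranspose_eq_transpose_of_trivial, specNorm_sq]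
  refine le_algebraMap_of_spectrum_le ?_ hA.isSelfAdjoint
  rw [hA.spectrum_real_eq_range_eigenvalues]
  rintro _ ⟨i, rfl⟩
  exact le_ciSup (Set.finite_range _).bddAbove i

-- `AᵀA ≤ ‖A‖² • 1` in the Loewner order; conjugating by `B` and taking traces gives the bound.
lemma frob_mul_le (A : Matrix m n ℝ) (B : Matrix n p ℝ) :
    frob (A * B) ≤ specNorm A * frob B := by
  have hpsd : (Bᵀ * (specNorm A ^ 2 • 1 - Aᵀ * A) * B).PosSemidef := by
    have := Matrix.le_iff.mp (transpose_mul_self_le_specNorm_sq A)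
    rw [Algebra.algebraMap_eq_smul_one] at this
    simpa [conjTranspose_eq_transpose_of_trivial] using this.conjTranspose_mul_mul_same B
  have hsq : frob (A * B) ^ 2 ≤ (specNorm A * frob B) ^ 2 := by
    have := hpsd.trace_nonneg
    rw [mul_pow, frob_sq, frob_sq, transpose_mul]
    simp only [Matrix.mul_sub, Matrix.sub_mul, trace_sub, Matrix.mul_smul, Matrix.smul_mul,
      Matrix.mul_one, trace_smul, smul_eq_mul, Matrix.mul_assoc] at this ⊢
    linarith
  exact (pow_le_pow_iff_left₀ (frob_nonneg _)
    (mul_nonneg (specNorm_nonneg A) (frob_nonneg B)) two_ne_zero).mp hsq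

end Spectral

lemma mul_transpose_sub_mul_transpose {m n r α : Type*} [Fintype r] [CommRing α]
    (L L₀ : Matrix m r α) (R R₀ : Matrix n r α) :
    L * Rᵀ - L₀ * R₀ᵀ = (L - L₀) * R₀ᵀ + L₀ * (R - R₀)ᵀ + (L - L₀) * (R - R₀)ᵀ := by
  simp only [transpose_sub, Matrix.sub_mul, Matrix.mul_sub]
  abel

section Factorization

variable {m n r : Type*} [Fintype m] [Fintype n] [Fintype r] [DecidableEq r]

lemma frob_mul_transpose_le_of_mul_eq_one {D D' : Matrix r r ℝ} (hD : D' * D = 1)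
    (X : Matrix m r ℝ) (Y : Matrix n r ℝ) :
    frob (X * Yᵀ) ≤ specNorm (X * D') * frob (Y * Dᵀ) := by
  calc frob (X * Yᵀ) = frob ((X * D') * (Y * Dᵀ)ᵀ) := by
        rw [transpose_mul, transpose_transpose, Matrix.mul_assoc, ← Matrix.mul_assoc D', hD,
          Matrix.one_mul]
    _ ≤ specNorm (X * D') * frob (Y * Dᵀ)ᵀ := frob_mul_le _ _
    _ = specNorm (X * D') * frob (Y * Dᵀ) := by rw [frob_transpose]

theorem frob_mul_transpose_sub_le {D D' : Matrix r r ℝ} (hD : D' * D = 1)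
    {U : Matrix m r ℝ} {V : Matrix n r ℝ} (hU : Uᵀ * U = 1) (hV : Vᵀ * V = 1)
    (L : Matrix m r ℝ) (R : Matrix n r ℝ) :
    frob (L * Rᵀ - U * D * (V * D)ᵀ) ≤
      (1 + 1 / 2 * max (specNorm ((L - U * D) * D')) (specNorm ((R - V * D) * D'))) *
        (frob ((L - U * D) * Dᵀ) + frob ((R - V * D) * Dᵀ)) := by
  set ΔL := L - U * D
  set ΔR := R - V * D
  set sL := specNorm (ΔL * D')
  set sR := specNorm (ΔR * D')
  have hL : frob (ΔL * (V * D)ᵀ) = frob (ΔL * Dᵀ) := by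
    rw [transpose_mul, ← Matrix.mul_assoc, frob_mul_transpose_of_transpose_mul_self_eq_one hV]
  have hR : frob (U * D * ΔRᵀ) = frob (ΔR * Dᵀ) := by
    rw [Matrix.mul_assoc, frob_mul_of_transpose_mul_self_eq_one hU, ← frob_transpose,
      transpose_mul, transpose_transpose]
  have hLR : frob (ΔL * ΔRᵀ) ≤ sL * frob (ΔR * Dᵀ) :=
    frob_mul_transpose_le_of_mul_eq_one hD ΔL ΔR
  have hRL : frob (ΔL * ΔRᵀ) ≤ sR * frob (ΔL * Dᵀ) := by
    rw [← frob_transpose, transpose_mul, transpose_transpose]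
    exact frob_mul_transpose_le_of_mul_eq_one hD ΔR ΔL
  have hmaxL := mul_le_mul_of_nonneg_right (le_max_left sL sR) (frob_nonneg (ΔR * Dᵀ))
  have hmaxR := mul_le_mul_of_nonneg_right (le_max_right sL sR) (frob_nonneg (ΔL * Dᵀ))
  have htri₁ := frob_add_le (ΔL * (V * D)ᵀ + U * D * ΔRᵀ) (ΔL * ΔRᵀ)
  have htri₂ := frob_add_le (ΔL * (V * D)ᵀ) (U * D * ΔRᵀ)
  rw [mul_transpose_sub_mul_transpose L (U * D) R (V * D)]
  linarith

end Factorization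

theorem stmt_9 {n₁ n₂ r : Type*} [Fintype n₁] [Fintype n₂] [Fintype r] [DecidableEq r]
    (U : Matrix n₁ r ℝ) (V : Matrix n₂ r ℝ) (g : r → ℝ) (hg : ∀ i, 0 < g i)
    (hU : Uᵀ * U = 1) (hV : Vᵀ * V = 1)
    (Ls : Matrix n₁ r ℝ) (Rs : Matrix n₂ r ℝ) :
    frob (Ls * Rsᵀ - (U * Matrix.diagonal g) * (V * Matrix.diagonal g)ᵀ) ≤
      (1 + (1 / 2) *
        max (specNorm ((Ls - U * Matrix.diagonal g) * Matrix.diagonal (fun i => (g i)⁻¹)))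
            (specNorm ((Rs - V * Matrix.diagonal g) * Matrix.diagonal (fun i => (g i)⁻¹)))) *
      (frob ((Ls - U * Matrix.diagonal g) * Matrix.diagonal g) +
       frob ((Rs - V * Matrix.diagonal g) * Matrix.diagonal g)) := by
  have hD : diagonal (fun i => (g i)⁻¹) * diagonal g = 1 := by
    rw [diagonal_mul_diagonal, ← diagonal_one]
    exact congrArg diagonal (funext fun i => inv_mul_cancel₀ (hg i).ne')
  simpa only [diagonal_transpose] using frob_mul_transpose_sub_le hD hU hV Ls Rs
end

section
/- (Non-expansiveness of scaling toward a target) Let a, a_⋆ be vectors in ℝⁿ with a ≠ 0, and let λ ∈ ℝ satisfy λ ≥ ‖a_⋆‖₂/‖a‖₂. Then ‖min(1, λ)·a − a_⋆‖₂ ≤ ‖a − a_⋆‖₂. -/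
theorem stmt_11 {n : ℕ} (a astar : EuclideanSpace ℝ (Fin n)) (ha : a ≠ 0)
    (lam : ℝ) (hlam : ‖astar‖ / ‖a‖ ≤ lam) :
    ‖(min 1 lam) • a - astar‖ ≤ ‖a - astar‖ := by
  rcases le_or_gt 1 lam with h | h
  · simp [min_eq_left h]
  · have ht : min 1 lam = lam := min_eq_right h.le
    rw [ht]
    have ha' : 0 < ‖a‖ := norm_pos_iff.mpr ha
    have hst : ‖astar‖ ≤ lam * ‖a‖ := (div_le_iff₀ ha').mp hlam
    have hlam0 : 0 ≤ lam :=
      le_trans (div_nonneg (norm_nonneg _) (norm_nonneg _)) hlam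
    have hinner : (inner ℝ a astar : ℝ) ≤ lam * ‖a‖ ^ 2 := by
      have := real_inner_le_norm a astar
      nlinarith [norm_nonneg a]
    have hsq : ‖lam • a - astar‖ ^ 2 ≤ ‖a - astar‖ ^ 2 := by
      rw [norm_sub_sq_real, norm_sub_sq_real, real_inner_smul_left, norm_smul,
        Real.norm_eq_abs, abs_of_nonneg hlam0]
      nlinarith [mul_le_mul_of_nonneg_left hinner (by linarith : (0:ℝ) ≤ 1 - lam), mul_nonneg (mul_nonneg (sub_nonneg.mpr h.le) (sub_nonneg.mpr h.le)) (sq_nonneg ‖a‖)]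
    nlinarith [norm_nonneg (lam • a - astar), norm_nonneg (a - astar)]
end
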